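/- arXiv:2402.05381 — 10 statements merged into one kernel-verified Lean document; each statement's English description precedes it below -/
import Mathlib

section
/- (Fine and Wilf) If a word w has periods p and q and |w| ≥ p + q - gcd(p, q), then w also has period gcd(p, q). -/
theorem List.hasPeriod_map_range_iff {α : Type*} (w : ℕ → α) (n p : ℕ) :
    ((List.range n).map w).HasPeriod p ↔ ∀ i, i + p < n → w i = w (i + p) := by
  simp only [List.hasPeriod_iff_getElem?, List.length_map, List.length_range, List.getElem?_map]
  refine forall_congr' fun i => ⟨fun h hi => ?_, fun h hi => ?_⟩
  · simpa [hi, show i < n by omega] using h (by omega)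
  · simp [h (by omega), show i < n by omega, show i + p < n by omega]

/-- Fine and Wilf: if a word `w` of length `n` has periods `p` and `q` and
`n ≥ p + q - gcd(p,q)`, then `w` has period `gcd(p,q)`. -/
theorem stmt_1 {α : Type*} (w : ℕ → α) (n p q : ℕ)
    (hp : ∀ i, i + p < n → w i = w (i + p))
    (hq : ∀ i, i + q < n → w i = w (i + q))
    (hlen : p + q - Nat.gcd p q ≤ n) :
    ∀ i, i + Nat.gcd p q < n → w i = w (i + Nat.gcd p q) := by
  simp only [← List.hasPeriod_map_range_iff] at hp hq ⊢
  exact hp.gcd hq (by simpa using hlen)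
end

section
/- Let w be a word with period q which has a factor u with |u| ≥ q such that u has period r, where r divides q. Then w has period r. -/
/-!
Every position `i` of `w` is congruent modulo `q` to a position `j` of the first `q` letters of
`u`, and likewise `i + r` to such a position `k`. Period `q` gives `w i = w j` and
`w (i + r) = w k`. Since `r ∣ q`, both congruences also hold modulo `r`, so `j ≡ i ≡ i + r ≡ k`
modulo `r`, and the period `r` of `u` gives `w j = w k`.
-/

/-- `w` has period `p` on the factor occupying the positions in `[a, b)`. -/
def PeriodicOn {α : Type*} (w : ℕ → α) (p a b : ℕ) : Prop :=
  ∀ i, a ≤ i → i + p < b → w i = w (i + p)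

namespace PeriodicOn

variable {α : Type*} {w : ℕ → α} {p a b : ℕ}

theorem apply_add_mul (hw : PeriodicOn w p a b) (k : ℕ) :
    ∀ x, a ≤ x → x + p * k < b → w x = w (x + p * k) := by
  induction k with
  | zero => simp
  | succ k ih =>
    intro x hax hx
    rw [Nat.mul_succ] at hx ⊢
    calc w x = w (x + p) := hw x hax (by omega)
      _ = w (x + p + p * k) := ih (x + p) (by omega) (by omega)
      _ = w (x + (p * k + p)) := by rw [Nat.add_comm (p * k), Nat.add_assoc]

theorem apply_eq_of_modEq (hw : PeriodicOn w p a b) {x y : ℕ} (hax : a ≤ x) (hay : a ≤ y)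
    (hxb : x < b) (hyb : y < b) (hxy : x ≡ y [MOD p]) : w x = w y := by
  wlog hle : x ≤ y generalizing x y
  · exact (this hay hax hyb hxb hxy.symm (by omega)).symm
  obtain ⟨k, hk⟩ := (Nat.modEq_iff_dvd' hle).mp hxy
  obtain rfl : y = x + p * k := by omega
  exact hw.apply_add_mul k x hax hyb

end PeriodicOn

theorem Nat.exists_modEq_mem_Ico (a : ℕ) {q : ℕ} (hq : 0 < q) (x : ℕ) :
    ∃ j, a ≤ j ∧ j < a + q ∧ j ≡ x [MOD q] := by
  -- `x + q * a ≡ x` lies above `a`, so the truncated subtraction below is exact.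
  have ha : a ≤ x + q * a := (Nat.le_mul_of_pos_left a hq).trans (Nat.le_add_left _ _)
  refine ⟨a + (x + q * a - a) % q, by omega, by have := Nat.mod_lt (x + q * a - a) hq; omega, ?_⟩
  calc a + (x + q * a - a) % q ≡ a + (x + q * a - a) [MOD q] := (Nat.mod_modEq _ q).add_left a
    _ = x + q * a := by omega
    _ ≡ x [MOD q] := Nat.add_mul_mod_self_left x q a

/-- If a word `w` of length `n` has period `q`, and a factor `w[a..a+m)` of length
`m ≥ q` has period `r` with `r ∣ q`, then `w` has period `r`. -/
theorem stmt_4 {α : Type*} (w : ℕ → α) (n q a m r : ℕ) (hq0 : 0 < q)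
    (hq : ∀ i, i + q < n → w i = w (i + q))
    (hm : q ≤ m) (ham : a + m ≤ n)
    (hr : ∀ i, a ≤ i → i + r < a + m → w i = w (i + r))
    (hdvd : r ∣ q) :
    ∀ i, i + r < n → w i = w (i + r) := by
  intro i hi
  have hwq : PeriodicOn w q 0 n := fun i _ h => hq i h
  have hwr : PeriodicOn w r a (a + m) := hr
  obtain ⟨j, haj, hjq, hji⟩ := Nat.exists_modEq_mem_Ico a hq0 i
  obtain ⟨k, hak, hkq, hki⟩ := Nat.exists_modEq_mem_Ico a hq0 (i + r)
  have hjk : j ≡ k [MOD r] :=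
    (hji.of_dvd hdvd).trans (Nat.add_modEq_right.symm.trans (hki.of_dvd hdvd).symm)
  calc w i = w j := hwq.apply_eq_of_modEq (Nat.zero_le _) (Nat.zero_le _) (by omega) (by omega) hji.symm
    _ = w k := hwr.apply_eq_of_modEq haj hak (by omega) (by omega) hjk
    _ = w (i + r) := hwq.apply_eq_of_modEq (Nat.zero_le _) (Nat.zero_le _) (by omega) hi hki
end

section
/- If a word w has period p and w[i+1..i+q] = w[j+1..j+q] for some i < j with j < i + q and q ≥ p, then w has period gcd(p, j - i). -/
/-- If a word `w` of length `n` has period `p` and two length-`q` factors starting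
at positions `i < j` with `j < i + q` and `q ≥ p` coincide, then `w` has period
`gcd(p, j - i)`. -/
theorem stmt_6 {α : Type*} (w : ℕ → α) (n p q i j : ℕ) (hp0 : 0 < p)
    (hp : ∀ k, k + p < n → w k = w (k + p))
    (hij : i < j) (hji : j < i + q) (hpq : p ≤ q) (hjq : j + q ≤ n)
    (heq : ∀ t < q, w (i + t) = w (j + t)) :
    ∀ k, k + Nat.gcd p (j - i) < n → w k = w (k + Nat.gcd p (j - i)) := by
  set d := j - i with hd
  have hjid : j = i + d := by omega
  have hd0 : 0 < d := by omega
  have hdq : d < q := by omega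
  set g := Nat.gcd p d with hg
  have hgp : g ≤ p := Nat.gcd_le_left _ hp0
  have hgd : g ≤ d := Nat.gcd_le_right _ hd0
  have hg0 : 0 < g := Nat.gcd_pos_of_pos_left _ hp0
  -- multi-step period p
  have Lp : ∀ m x, x + m * p < n → w x = w (x + m * p) := by
    intro m
    induction m with
    | zero => intro x _; simp
    | succ m ih =>
      intro x hx
      have h1 : w x = w (x + p) := hp x (by nlinarith [Nat.succ_mul m p])
      have h2 : w (x + p) = w (x + p + m * p) := ih (x + p)
        (by nlinarith [Nat.succ_mul m p])
      rw [h1, h2]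
      congr 1
      rw [Nat.succ_mul]; ring
  -- rotation by d within one period window
  have L0 : ∀ r < p, w (i + r) = w (i + (r + d) % p) := by
    intro r hr
    have h1 : w (i + r) = w (i + r + d) := by
      have := heq r (by omega)
      rw [hjid] at this
      rw [this]; ring_nf
    have hmod : (r + d) % p + ((r + d) / p) * p = r + d := by
      rw [Nat.mod_add_div']
    have h2 : w (i + (r + d) % p) = w (i + (r + d) % p + ((r + d) / p) * p) := by
      apply Lp
      omega
    rw [h1, h2]
    congr 1
    omega
  -- iterated rotation
  have L1 : ∀ s r, r < p → w (i + r) = w (i + (r + s * d) % p) := by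
    intro s
    induction s with
    | zero => intro r hr; rw [Nat.mod_eq_of_lt (by omega)]; simp
    | succ s ih =>
      intro r hr
      have h1 := ih r hr
      have h2 := L0 ((r + s * d) % p) (Nat.mod_lt _ hp0)
      rw [h1, h2]
      congr 2
      rw [Nat.mod_add_mod, Nat.succ_mul]
      ring_nf
  -- rotation by g within one period window
  have Lg : ∀ r < p, i + r + g < n → w (i + r) = w (i + r + g) := by
    intro r hr hrn
    rcases eq_or_lt_of_le hgp with hgeq | hglt
    · -- g = p
      have := hp (i + r) (by omega)
      rw [this, hgeq]
    · obtain ⟨s, -, hs⟩ := Nat.exists_mul_mod_eq_gcd (k := p) (n := d) (by rwa [Nat.gcd_comm])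
      rw [Nat.gcd_comm] at hs
      have key := L1 s r hr
      have hmodg : (r + s * d) % p = (r + g) % p := by
        rw [Nat.add_mod r (s * d), Nat.mul_comm s d, hs, Nat.add_mod r g,
          Nat.mod_eq_of_lt hglt]
      rw [hmodg] at key
      rcases lt_or_ge (r + g) p with h | h
      · rw [Nat.mod_eq_of_lt h] at key
        rw [key]; ring_nf
      · have hmod2 : (r + g) % p = r + g - p := by
          rw [Nat.mod_eq_sub_mod h, Nat.mod_eq_of_lt (by omega)]
        rw [hmod2] at key
        have h3 : w (i + (r + g - p)) = w (i + (r + g - p) + p) := hp _ (by omega)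
        rw [key, h3]
        congr 1
        omega
  -- main argument
  intro k hk
  obtain ⟨c, r, hrp, hke⟩ :
      ∃ c r, r < p ∧ (k = i + r + c * p ∨ i + r = k + c * p) := by
    rcases le_or_gt i k with hik | hik
    · refine ⟨(k - i) / p, (k - i) % p, Nat.mod_lt _ hp0, Or.inl ?_⟩
      have h := Nat.div_add_mod (k - i) p
      have hc : p * ((k - i) / p) = (k - i) / p * p := Nat.mul_comm _ _
      omega
    · obtain ⟨c, h1, h2⟩ : ∃ c, i - k ≤ c * p ∧ c * p < (i - k) + p := by
        refine ⟨(i - k + p - 1) / p, ?_, ?_⟩ <;>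
        · have h := Nat.div_add_mod (i - k + p - 1) p
          have hs := Nat.mod_lt (i - k + p - 1) hp0
          have hc : p * ((i - k + p - 1) / p) = (i - k + p - 1) / p * p :=
            Nat.mul_comm _ _
          omega
      refine ⟨c, k + c * p - i, by omega, Or.inr (by omega)⟩
  have hk'g : i + r + g < n := by omega
  have hwg : w (i + r) = w (i + r + g) := Lg r hrp hk'g
  rcases hke with hke | hke
  · have e1 : w (i + r) = w k := by
      rw [hke]; exact Lp c (i + r) (by omega)
    have e2 : w (i + r + g) = w (k + g) := by
      have hke2 : k + g = (i + r + g) + c * p := by omega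
      rw [hke2]; exact Lp c (i + r + g) (by omega)
    rw [← e1, ← e2]; exact hwg
  · have e1 : w k = w (i + r) := by
      rw [hke]; exact Lp c k (by omega)
    have e2 : w (k + g) = w (i + r + g) := by
      have hke2 : i + r + g = (k + g) + c * p := by omega
      rw [hke2]; exact Lp c (k + g) (by omega)
    rw [e1, e2]; exact hwg
end

section
/- If w is a palindrome which has period p and |w| ≥ 2p + 1, then w is a factor of (st)^ω for some palindromes s and t with |st| = p; that is, w is a palindromic periodicity with period p. -/
/-- `w` (of length `n`) is a palindromic periodicity with period `p`: there are
palindromes `s` (length `sl`) and `t` (length `p - sl`), encoded as the word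
`u = st` of length `p`, such that `w` is a factor of `(st)^ω` and `|w| ≥ p`. -/
def PalPer {α : Type*} (w : ℕ → α) (n p : ℕ) : Prop :=
  0 < p ∧ p ≤ n ∧
    ∃ (sl : ℕ) (u : ℕ → α) (k : ℕ), sl ≤ p ∧
      (∀ i j, i + j + 1 = sl → u i = u j) ∧
      (∀ i j, sl ≤ i → sl ≤ j → i + j + 1 = sl + p → u i = u j) ∧
      (∀ i < n, w i = u ((k + i) % p))

/-!
Take `s t` to be the first period block `w[0..p)` of `w` itself, cut at `sl = n mod p`.
Periodicity makes `w` a factor of `(w[0..p))^ω`. Reflecting position `i` of the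
palindrome to `n - 1 - i` and reducing mod `p` shows that `w i = w j` for `i, j < p`
whenever `i + j + 1 ≡ n (mod p)`; for `i + j + 1 = sl` this says `s` is a palindrome,
and for `i + j + 1 = sl + p` that `t` is one.
-/

section

variable {α : Type*} {w : ℕ → α} {n p : ℕ}

theorem apply_add_mul_of_period (hper : ∀ i, i + p < n → w i = w (i + p)) :
    ∀ q i, i + p * q < n → w (i + p * q) = w i
  | 0, i, _ => rfl
  | q + 1, i, h => by
    rw [mul_add_one, ← add_assoc, ← hper _ (by lia)]
    exact apply_add_mul_of_period hper q i (by lia)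

theorem apply_mod_of_period (hper : ∀ i, i + p < n → w i = w (i + p)) {i : ℕ} (hi : i < n) :
    w i = w (i % p) :=
  calc w i = w (i % p + p * (i / p)) := by rw [Nat.mod_add_div]
    _ = w (i % p) := apply_add_mul_of_period hper _ _ (by rwa [Nat.mod_add_div])

theorem apply_eq_of_add_add_one_modEq (hpn : p ≤ n)
    (hpal : ∀ i j, i + j + 1 = n → w i = w j) (hper : ∀ i, i + p < n → w i = w (i + p))
    {i j : ℕ} (hi : i < p) (hj : j < p) (hij : i + j + 1 ≡ n [MOD p]) : w i = w j := by
  have hrefl : j ≡ n - 1 - i [MOD p] := by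
    refine Nat.ModEq.add_right_cancel' (i + 1) ?_
    rw [show n - 1 - i + (i + 1) = n by lia, ← add_assoc, add_comm j i]
    exact hij
  calc w i = w (n - 1 - i) := hpal _ _ (by lia)
    _ = w ((n - 1 - i) % p) := apply_mod_of_period hper (by lia)
    _ = w j := by rw [← hrefl, Nat.mod_eq_of_lt hj]

theorem palPer_of_apply_mod (hp : 0 < p) (hpn : p ≤ n) {sl : ℕ} (hsl : sl ≤ p)
    (hmod : ∀ i < n, w i = w (i % p))
    (hrefl : ∀ i j, i < p → j < p → i + j + 1 ≡ sl [MOD p] → w i = w j) :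
    PalPer w n p := by
  refine ⟨hp, hpn, sl, w, 0, hsl, fun i j hij => ?_, fun i j hi hj hij => ?_, ?_⟩
  · exact hrefl i j (by lia) (by lia) (by rw [hij])
  · exact hrefl i j (by lia) (by lia) (by rw [hij, Nat.ModEq, Nat.add_mod_right])
  · simpa only [zero_add] using hmod

end

/-- A palindrome `w` of length `n` with period `p` and `n ≥ 2p + 1` is a
palindromic periodicity with period `p`. -/
theorem stmt_7 {α : Type*} (w : ℕ → α) (n p : ℕ) (hp0 : 0 < p)
    (hpal : ∀ i j, i + j + 1 = n → w i = w j)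
    (hper : ∀ i, i + p < n → w i = w (i + p))
    (hn : 2 * p + 1 ≤ n) :
    PalPer w n p := by
  have hpn : p ≤ n := by lia
  refine palPer_of_apply_mod hp0 hpn (Nat.mod_lt n hp0).le
    (fun i hi => apply_mod_of_period hper hi) fun i j hi hj hij => ?_
  exact apply_eq_of_add_add_one_modEq hpn hpal hper hi hj (hij.trans (Nat.mod_modEq n p))
end

section
/- Let u be a finite word of length n and v = R(u) its reverse. If a word w is simultaneously a prefix of u'·u^ω for some suffix u' of u, and a prefix of v'·v^ω for some suffix v' of v, and |w| ≥ n, then w is a palindromic periodicity with period n (i.e., w is a factor of (st)^ω for palindromes s, t with |st| = n). -/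
/-!
Let `A = n - a` and `B = n - b`. The first reading gives `w i = u ((A + i) % n)`, i.e. `w` is a
prefix of the periodic extension of the rotation `U j = u ((A + j) % n)` of `u`, while the second
gives `w i = u (n - 1 - (B + i) % n)`. Comparing the two readings at position `i` shows that
`U i = U j` whenever `i + j ≡ c [MOD n]`, where `A + B + c ≡ n - 1 [MOD n]`: the rotation `U` is
invariant under the reflection `i ↦ c - i` of `ℤ/n`, so `U` is the product of the palindromes
`U[0, c]` and `U[c + 1, n)`.
-/

lemma Nat.exists_lt_add_modEq {n : ℕ} (hn : 0 < n) (x y : ℕ) : ∃ c < n, x + c ≡ y [MOD n] := by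
  have : NeZero n := ⟨hn.ne'⟩
  refine ⟨((y : ZMod n) - x).val, ZMod.val_lt _, ?_⟩
  rw [← ZMod.natCast_eq_natCast_iff]
  push_cast
  rw [ZMod.natCast_zmod_val]
  ring

lemma Nat.mod_eq_sub_mod_of_add_modEq {n x y : ℕ} (hn : 0 < n) (h : x + y ≡ n - 1 [MOD n]) :
    x % n = n - 1 - y % n := by
  have hx := Nat.mod_lt x hn
  have hy := Nat.mod_lt y hn
  have hsum : (x + y) % n = n - 1 := (Nat.mod_eq_of_lt (by omega : n - 1 < n)) ▸ h
  rw [Nat.add_mod_eq_ite] at hsum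
  split_ifs at hsum <;> omega

lemma palPer_of_add_modEq_symm {α : Type*} {w U : ℕ → α} {n m c : ℕ} (hn : 0 < n) (hm : n ≤ m)
    (hc : c < n) (hU : ∀ i j, i < n → j < n → i + j ≡ c [MOD n] → U i = U j)
    (hw : ∀ i < m, w i = U (i % n)) :
    PalPer w m n := by
  refine ⟨hn, hm, c + 1, U, 0, hc, ?_, ?_, ?_⟩
  · intro i j hij
    exact hU i j (by omega) (by omega) (by rw [show i + j = c by omega])
  · intro i j _ _ hij
    exact hU i j (by omega) (by omega)
      (by rw [show i + j = c + n by omega]; exact Nat.add_modulus_modEq_iff.mpr rfl)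
  · intro i hi
    rw [zero_add]
    exact hw i hi

theorem stmt_8_general {α : Type*} (u : ℕ → α) (n : ℕ) (hn : 0 < n)
    (w : ℕ → α) (m a b : ℕ)
    (h1 : ∀ i < m, w i = u ((n - a + i) % n))
    (h2 : ∀ i < m, w i = u (n - 1 - ((n - b + i) % n)))
    (hm : n ≤ m) :
    PalPer w m n := by
  obtain ⟨c, hc, hABc⟩ := Nat.exists_lt_add_modEq hn (n - a + (n - b)) (n - 1)
  refine palPer_of_add_modEq_symm (U := fun j => u ((n - a + j) % n)) hn hm hc ?_ ?_
  · intro i j hi _ hij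
    have hreadings : u ((n - a + i) % n) = u (n - 1 - (n - b + i) % n) :=
      (h1 i (by omega)).symm.trans (h2 i (by omega))
    have hsum : n - a + j + (n - b + i) ≡ n - 1 [MOD n] := by
      calc n - a + j + (n - b + i) = n - a + (n - b) + (i + j) := by ring
        _ ≡ n - a + (n - b) + c [MOD n] := Nat.ModEq.add_left _ hij
        _ ≡ n - 1 [MOD n] := hABc
    rw [hreadings, Nat.mod_eq_sub_mod_of_add_modEq hn hsum]
  · intro i hi
    simp only [Nat.add_mod_mod]
    exact h1 i hi

/-- Let `u` have length `n` and `v = R(u)` (so `v j = u (n - 1 - j)`).  If `w`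
(of length `m ≥ n`) is a prefix of `u'·u^ω` where `u'` is the length-`a` suffix
of `u`, and also a prefix of `v'·v^ω` where `v'` is the length-`b` suffix of `v`
(the prefix conditions are expressed by reading the periodic infinite words),
then `w` is a palindromic periodicity with period `n`. -/
theorem stmt_8 {α : Type*} (u : ℕ → α) (n : ℕ) (hn : 0 < n)
    (w : ℕ → α) (m a b : ℕ) (ha : a ≤ n) (hb : b ≤ n)
    (h1 : ∀ i < m, w i = u ((n - a + i) % n))
    (h2 : ∀ i < m, w i = u (n - 1 - ((n - b + i) % n)))
    (hm : n ≤ m) :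
    PalPer w m n :=
  stmt_8_general u n hn w m a b h1 h2 hm
end

section
/- Let w[a..b] and w[c..d] be palindromic factors of a word w with (a+b)/2 < (c+d)/2, which intersect (a ≤ c ≤ b ≤ d), with neither a proper factor of the other. Then the union w[a..d] has a border of length b - c + 1 and hence has period d - a - b + c, which is twice the distance between the two palindromes' centres. -/
/-!
Reflecting in the centre of `w[a..b]` and then in the centre of `w[c..d]` translates positions by
`(c + d) - (a + b)`, and the overlap conditions keep the intermediate position inside both
palindromes. Applied to the prefix `w[a..a + (b - c)]` this gives the border, and applied to every
position whose translate stays in `w[a..d]` it gives the period.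
-/

/-- `w[lo..s - lo]` is a palindrome, with centre `s / 2`. -/
def ReflectsAbout {α : Type*} (w : ℕ → α) (lo s : ℕ) : Prop :=
  ∀ i j, lo ≤ i → lo ≤ j → i + j = s → w i = w j

theorem ReflectsAbout.eq_of_reflect_reflect {α : Type*} {w : ℕ → α} {lo s lo' s' i j k : ℕ}
    (h : ReflectsAbout w lo s) (h' : ReflectsAbout w lo' s')
    (hi : lo ≤ i) (hk : lo ≤ k) (hk' : lo' ≤ k) (hj : lo' ≤ j)
    (hik : i + k = s) (hkj : k + j = s') : w i = w j :=
  (h i k hi hk hik).trans (h' k j hk' hj hkj)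

theorem stmt_11_general {α : Type*} (w : ℕ → α) (a b c d : ℕ)
    (hpal1 : ∀ i j, a ≤ i → a ≤ j → i + j = a + b → w i = w j)
    (hpal2 : ∀ i j, c ≤ i → c ≤ j → i + j = c + d → w i = w j)
    (hac : a ≤ c) (hcb : c ≤ b) (hbd : b ≤ d) :
    (∀ t ≤ b - c, w (a + t) = w (c + d - b + t)) ∧
    (∀ i, a ≤ i → i + ((c + d) - (a + b)) ≤ d →
      w i = w (i + ((c + d) - (a + b)))) := by
  have h1 : ReflectsAbout w a (a + b) := hpal1
  have h2 : ReflectsAbout w c (c + d) := hpal2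
  refine ⟨fun t ht => ?_, fun i hi hid => ?_⟩
  · exact h1.eq_of_reflect_reflect h2 (k := b - t) (by omega) (by omega) (by omega) (by omega)
      (by omega) (by omega)
  · exact h1.eq_of_reflect_reflect h2 (k := a + b - i) hi (by omega) (by omega) (by omega)
      (by omega) (by omega)

/-- Two palindromic factors `w[a..b]` and `w[c..d]` with `(a+b)/2 < (c+d)/2`,
intersecting (`a ≤ c ≤ b ≤ d`), neither a proper factor of the other.  Then the
union `w[a..d]` has a border of length `b - c + 1` (its prefix `w[a..a+(b-c)]`
equals its suffix `w[c+d-b..d]`) and hence has period `(c+d) - (a+b)`, twice the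
distance between the centres. -/
theorem stmt_11 {α : Type*} (w : ℕ → α) (a b c d : ℕ)
    (hpal1 : ∀ i j, a ≤ i → a ≤ j → i + j = a + b → w i = w j)
    (hpal2 : ∀ i j, c ≤ i → c ≤ j → i + j = c + d → w i = w j)
    (hcent : a + b < c + d)
    (hac : a ≤ c) (hcb : c ≤ b) (hbd : b ≤ d) :
    (∀ t ≤ b - c, w (a + t) = w (c + d - b + t)) ∧
    (∀ i, a ≤ i → i + ((c + d) - (a + b)) ≤ d →
      w i = w (i + ((c + d) - (a + b)))) :=
  stmt_11_general w a b c d hpal1 hpal2 hac hcb hbd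
end

section
/- Let w[a..b] and w[c..d] be intersecting palindromic factors of w with a ≤ c ≤ b ≤ d, neither a proper factor of the other, and suppose w[a..b] does not contain the centre of w[c..d] (i.e., b < (c+d)/2). Then w[a..d] is a factor of (ps)^ω where p is the palindrome w[a..b] and s is the palindrome w[b+1..c+d-b-1]; in particular w[a..d] is a palindromic periodicity whose half-period equals the distance between the two centres. -/
/-!
Reflecting about the centre of `w[a..b]` and then about the centre of `w[c..d]` translates
positions by `T = (c + d) - (a + b)`, twice the distance between the centres. Hence `w[a..d]`
has period `T` and is the prefix-aligned factor of `(w[a..a+T-1])^ω = (ps)^ω`, while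
`s = w[b+1..c+d-b-1]` is a palindrome as a trimmed copy of `w[c..d]`.
-/

/-- `w[lo..s-lo]` is a palindrome; `s` is twice its centre. -/
def IsPalindromeAbout {α : Type*} (w : ℕ → α) (lo s : ℕ) : Prop :=
  ∀ i j, lo ≤ i → lo ≤ j → i + j = s → w i = w j

namespace IsPalindromeAbout

variable {α : Type*} {w : ℕ → α}

theorem mono {lo lo' s : ℕ} (h : IsPalindromeAbout w lo s) (hle : lo ≤ lo') :
    IsPalindromeAbout w lo' s :=
  fun i j hi hj hij => h i j (hle.trans hi) (hle.trans hj) hij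

theorem apply_add_sub_eq {a b c d : ℕ} (h₁ : IsPalindromeAbout w a (a + b))
    (h₂ : IsPalindromeAbout w c (c + d)) (hac : a ≤ c) (hbd : b ≤ d) {i : ℕ} (hai : a ≤ i)
    (hid : i + ((c + d) - (a + b)) ≤ d) :
    w (i + ((c + d) - (a + b))) = w i :=
  calc w (i + ((c + d) - (a + b)))
      = w (a + b - i) := h₂ _ _ (by omega) (by omega) (by omega)
    _ = w i := h₁ _ _ (by omega) hai (by omega)

end IsPalindromeAbout

theorem eq_apply_add_mod_of_shift {α : Type*} {w : ℕ → α} {a d T : ℕ}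
    (hshift : ∀ i, a ≤ i → i + T ≤ d → w (i + T) = w i) {i : ℕ} (hai : a ≤ i) (hid : i ≤ d) :
    w i = w (a + (i - a) % T) := by
  have iterate : ∀ k j, a ≤ j → j + k * T ≤ d → w (j + k * T) = w j := by
    intro k j hj
    induction k with
    | zero => simp
    | succ k ih =>
      intro hk
      rw [add_one_mul] at hk ⊢
      rw [← add_assoc, hshift _ (by omega) (by omega), ih (by omega)]
  have hdecomp : a + (i - a) % T + (i - a) / T * T = i := by
    have := Nat.mod_add_div' (i - a) T
    omega
  conv_lhs => rw [← hdecomp]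
  exact iterate _ _ (by omega) (by omega)

theorem stmt_12_general {α : Type*} (w : ℕ → α) (a b c d : ℕ)
    (hpal1 : ∀ i j, a ≤ i → a ≤ j → i + j = a + b → w i = w j)
    (hpal2 : ∀ i j, c ≤ i → c ≤ j → i + j = c + d → w i = w j)
    (hac : a ≤ c) (hcb : c ≤ b) (hbd : b ≤ d) :
    (∀ i j, b + 1 ≤ i → b + 1 ≤ j → i + j = c + d → w i = w j) ∧
    ((c + d) - (a + b) ≤ d - a + 1) ∧
    (∀ i, a ≤ i → i ≤ d → w i = w (a + (i - a) % ((c + d) - (a + b)))) := by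
  have hpal1 : IsPalindromeAbout w a (a + b) := hpal1
  have hpal2 : IsPalindromeAbout w c (c + d) := hpal2
  refine ⟨hpal2.mono (by omega), by omega, fun i hai hid => ?_⟩
  exact eq_apply_add_mod_of_shift
    (fun j hj hjd => hpal1.apply_add_sub_eq hpal2 hac hbd hj hjd) hai hid

/-- Two intersecting palindromic factors `w[a..b]` and `w[c..d]` with
`a ≤ c ≤ b ≤ d`, neither a proper factor of the other, where `w[a..b]` does not
contain the centre of `w[c..d]` (`2b < c + d`).  Then, with `p = w[a..b]` and
`s = w[b+1..c+d-b-1]`: `s` is a palindrome, `|ps| = (c+d)-(a+b)` is at most the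
length of `w[a..d]`, and `w[a..d]` is a (prefix-aligned) factor of `(ps)^ω`;
i.e. `w[a..d]` is a palindromic periodicity whose half-period is the distance
between the two centres. -/
theorem stmt_12 {α : Type*} (w : ℕ → α) (a b c d : ℕ)
    (hpal1 : ∀ i j, a ≤ i → a ≤ j → i + j = a + b → w i = w j)
    (hpal2 : ∀ i j, c ≤ i → c ≤ j → i + j = c + d → w i = w j)
    (hac : a ≤ c) (hcb : c ≤ b) (hbd : b ≤ d)
    (hb2 : 2 * b < c + d) :
    (∀ i j, b + 1 ≤ i → b + 1 ≤ j → i + j = c + d → w i = w j) ∧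
    ((c + d) - (a + b) ≤ d - a + 1) ∧
    (∀ i, a ≤ i → i ≤ d → w i = w (a + (i - a) % ((c + d) - (a + b)))) :=
  stmt_12_general w a b c d hpal1 hpal2 hac hcb hbd
end

section
/- Let w be a g-word (a palindrome) whose g-word prefix w' (as produced by the recursive construction) is a power of a palindrome u of length g. Then w itself is a power of u. In particular, every g-word of length at least 2g is a power of a palindrome of length g, and hence has period g. -/
/-!
Since `g ∣ n`, mirror positions `i` and `n - 1 - i` of `w` have residues mod `g` that are mirror
positions of `u`; hence the `u`-power `i ↦ u (i % g)` is itself a palindrome of length `n`.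
As `n ≤ 2 n'`, of every pair of mirror positions at least one lies in the prefix of length `n'`,
where `w` agrees with the `u`-power, so the two palindromes agree everywhere.
-/

theorem Nat.mod_add_mod_add_one_eq_of_dvd {g i j : ℕ} (hg : 0 < g) (h : g ∣ i + j + 1) :
    i % g + j % g + 1 = g := by
  have hmod : g ∣ i % g + j % g + 1 :=
    have hres : i % g + j % g + 1 ≡ i + j + 1 [MOD g] :=
      ((Nat.mod_modEq i g).add (Nat.mod_modEq j g)).add_right 1
    Nat.modEq_zero_iff_dvd.1 (hres.trans (Nat.modEq_zero_iff_dvd.2 h))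
  obtain ⟨k, hk⟩ := hmod
  have hi := Nat.mod_lt i hg
  have hj := Nat.mod_lt j hg
  have hk1 : k = 1 := by
    rcases k with _ | _ | k
    · omega
    · rfl
    · nlinarith
  rw [hk, hk1, mul_one]

theorem power_of_palindrome_apply_eq_of_dvd {α : Type*} {u : ℕ → α} {g i j : ℕ} (hg : 0 < g)
    (hupal : ∀ i j, i + j + 1 = g → u i = u j) (h : g ∣ i + j + 1) :
    u (i % g) = u (j % g) :=
  hupal _ _ (Nat.mod_add_mod_add_one_eq_of_dvd hg h)

theorem stmt_16_general {α : Type*} (w u : ℕ → α) (n n' g : ℕ) (hg : 0 < g)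
    (hpal : ∀ i j, i + j + 1 = n → w i = w j)
    (hle : n ≤ 2 * n')
    (hdvd : g ∣ n)
    (hupal : ∀ i j, i + j + 1 = g → u i = u j)
    (hpow : ∀ i < n', w i = u (i % g)) :
    ∀ i < n, w i = u (i % g) := by
  intro i hi
  by_cases hprefix : i < n'
  · exact hpow i hprefix
  have hmirror : i + (n - 1 - i) + 1 = n := by omega
  calc w i = w (n - 1 - i) := hpal _ _ hmirror
    _ = u ((n - 1 - i) % g) := hpow _ (by omega)
    _ = u (i % g) := (power_of_palindrome_apply_eq_of_dvd hg hupal (hmirror.symm ▸ hdvd)).symm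

/-- Corollary 3.4 / Theorem 3.5(a).  Let `w` be a g-word (a palindrome, of
length `n` a multiple of `g`) whose g-word prefix `w'` (of length `n'`, a
multiple of `g`, with `n/2 ≤ n' ≤ n`, as produced by the recursive
construction) is a power of a palindrome `u` of length `g`.  Then `w` itself is
a power of `u`; in particular every such g-word is a power of a length-`g`
palindrome and hence has period `g`. -/
theorem stmt_16 {α : Type*} (w u : ℕ → α) (n n' g : ℕ) (hg : 0 < g)
    (hpal : ∀ i j, i + j + 1 = n → w i = w j)
    (hle : n ≤ 2 * n') (hlt : n' ≤ n)
    (hdvd : g ∣ n) (hdvd' : g ∣ n')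
    (hupal : ∀ i j, i + j + 1 = g → u i = u j)
    (hpow : ∀ i < n', w i = u (i % g)) :
    ∀ i < n, w i = u (i % g) :=
  stmt_16_general w u n n' g hg hpal hle hdvd hupal hpow
end

section
/- If a word w of length n has a border u which is a palindrome with |u| ≥ n/2, then w is a palindromic periodicity: there exist palindromes s and t such that w is a factor of (st)^ω and |w| ≥ |st|. -/
section PalPer

variable {α : Type*} {w : ℕ → α} {n m p : ℕ}

lemma apply_add_mul_eq_of_periodic (hper : ∀ i, i + p < n → w (i + p) = w i) :
    ∀ k i, i + p * k < n → w (i + p * k) = w i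
  | 0, i, _ => rfl
  | k + 1, i, h => by
    rw [show i + p * (k + 1) = i + p * k + p by ring, hper _ (by linarith),
      apply_add_mul_eq_of_periodic hper k i (by nlinarith)]

lemma apply_eq_apply_mod_of_periodic (hper : ∀ i, i + p < n → w (i + p) = w i) {i : ℕ}
    (hi : i < n) : w i = w (i % p) := by
  conv_lhs => rw [← Nat.mod_add_div i p]
  exact apply_add_mul_eq_of_periodic hper _ _ (by rwa [Nat.mod_add_div])

lemma palPer_of_periodic_of_palindrome_prefix (hp : 0 < p) (hpm : p ≤ m) (hmn : m ≤ n)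
    (hper : ∀ i, i + p < n → w (i + p) = w i) (hpal : ∀ i j, i + j + 1 = m → w i = w j) :
    PalPer w n p := by
  obtain ⟨q, hq⟩ : ∃ q, m / p = q + 1 := ⟨m / p - 1, by
    have := (Nat.one_le_div_iff hp).mpr hpm; omega⟩
  have hm : m % p + p * (q + 1) = m := by rw [← hq, Nat.mod_add_div]
  have hr : m % p < p := Nat.mod_lt _ hp
  have reflect : ∀ i j k, i + j + 1 + p * k = m → w i = w j := fun i j k h => by
    rw [hpal i (j + p * k) (by omega), apply_add_mul_eq_of_periodic hper k j (by omega)]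
  refine ⟨hp, hpm.trans hmn, m % p, w, 0, hr.le, ?_, ?_, ?_⟩
  · exact fun i j h => reflect i j (q + 1) (by omega)
  · exact fun i j _ _ h => reflect i j q (by rw [← hm, mul_add]; omega)
  · exact fun i hi => by rw [zero_add]; exact apply_eq_apply_mod_of_periodic hper hi

end PalPer

/-- If a word `w` of length `n` has a border `u` (its length-`m` prefix equals
its length-`m` suffix) which is a palindrome with `m ≥ n/2`, then `w` is a
palindromic periodicity: there are palindromes `s`, `t` with `|w| ≥ |st|` such
that `w` is a factor of `(st)^ω`. -/
theorem stmt_18 {α : Type*} (w : ℕ → α) (n m : ℕ) (hn : 0 < n)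
    (hm : m ≤ n) (h2 : n ≤ 2 * m)
    (hborder : ∀ i < m, w i = w (n - m + i))
    (hupal : ∀ i j, i + j + 1 = m → w i = w j) :
    ∃ p, PalPer w n p := by
  rcases hm.lt_or_eq with hlt | rfl
  · refine ⟨n - m, palPer_of_periodic_of_palindrome_prefix (by omega) (by omega) hm
      (fun i hi => ?_) hupal⟩
    rw [hborder i (by omega), add_comm]
  · exact ⟨m, palPer_of_periodic_of_palindrome_prefix hn le_rfl le_rfl
      (fun i hi => by omega) hupal⟩
end

section
/- Let w be simultaneously a palindromic periodicity with parameters (offset r1, half-period h1) and with parameters (offset r2, half-period h2). If |w| ≥ 2h1 + 2h2 - gcd(2(r2 - r1), 2h1, 2h2), then w has period gcd(2(r2 - r1), 2h1, 2h2). -/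
/-- `w` (of length `N`) is a palindromic periodicity with doubled offset `r`
(`r = 2·offset`, 0-indexed) and doubled half-period `h` (`h = 2·half-period`,
so `h` is the period): `w` has period `h`, `|w| ≥ h`, and `w` is reflectively
symmetric about every essential centre `r + k·h` (in doubled coordinates,
positions `i` and `j` are symmetric about doubled centre `d` iff `i + j = d`). -/
def IsPalPer {α : Type*} (w : ℕ → α) (N : ℕ) (r : ℤ) (h : ℕ) : Prop :=
  0 < h ∧ h ≤ N ∧ 0 ≤ r ∧ r < h ∧
    (∀ i, i + h < N → w i = w (i + h)) ∧
    (∀ (k i j : ℕ), (i : ℤ) + j = r + k * h → i < N → j < N → w i = w j)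

private lemma key_iter {α : Type*} {w : ℕ → α} {N p : ℕ}
    (hper : ∀ i, i + p < N → w i = w (i + p)) :
    ∀ t i, i + t * p < N → w i = w (i + t * p) := by
  intro t
  induction t with
  | zero => intro i _; simp
  | succ t ih =>
    intro i h
    have e : i + (t + 1) * p = (i + p) + t * p := by ring
    rw [e] at h ⊢
    have hip : i + p < N := lt_of_le_of_lt (Nat.le_add_right _ _) h
    rw [← ih (i + p) h]
    exact hper i hip

private lemma chain_mod {α : Type*} {w : ℕ → α} {N p : ℕ}
    (hper : ∀ i, i + p < N → w i = w (i + p)) :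
    ∀ i j, i < N → j < N → i % p = j % p → w i = w j := by
  have main : ∀ i j, i ≤ j → j < N → i % p = j % p → w i = w j := by
    intro i j hle hj hmod
    have hdvd : p ∣ j - i := (Nat.modEq_iff_dvd' hle).mp hmod
    obtain ⟨t, ht⟩ := hdvd
    have hj' : j = i + t * p := by
      rw [(Nat.sub_eq_iff_eq_add hle).mp ht]; ring
    rw [hj']
    exact key_iter hper t i (hj' ▸ hj)
  intro i j hi hj hmod
  rcases le_total i j with h | h
  · exact main i j h hj hmod
  · exact (main j i h hi hmod.symm).symm

private lemma gcd_sub_left {p q : ℕ} (h : q ≤ p) : Nat.gcd (p - q) q = Nat.gcd p q := by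
  apply Nat.dvd_antisymm
  · apply Nat.dvd_gcd
    · have h3 : Nat.gcd (p - q) q ∣ (p - q) + q :=
        Nat.dvd_add (Nat.gcd_dvd_left _ _) (Nat.gcd_dvd_right _ _)
      rwa [Nat.sub_add_cancel h] at h3
    · exact Nat.gcd_dvd_right _ _
  · exact Nat.dvd_gcd (Nat.dvd_sub (Nat.gcd_dvd_left p q) (Nat.gcd_dvd_right p q))
      (Nat.gcd_dvd_right p q)

private lemma fw_step {α : Type*} {w : ℕ → α} {n : ℕ}
    (ih : ∀ p q N, p + q ≤ n → 0 < p → 0 < q →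
      (∀ i, i + p < N → w i = w (i + p)) → (∀ i, i + q < N → w i = w (i + q)) →
      p + q - Nat.gcd p q ≤ N →
      ∀ i j, i < N → j < N → i % Nat.gcd p q = j % Nat.gcd p q → w i = w j)
    {p q N : ℕ} (hn : p + q ≤ n + 1) (hq : 0 < q) (hlt : q < p)
    (hperp : ∀ i, i + p < N → w i = w (i + p))
    (hperq : ∀ i, i + q < N → w i = w (i + q))
    (hN : p + q - Nat.gcd p q ≤ N) :
    ∀ i j, i < N → j < N → i % Nat.gcd p q = j % Nat.gcd p q → w i = w j := by
  set g := Nat.gcd p q with hgdef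
  have hgp : g ∣ p := Nat.gcd_dvd_left p q
  have hgq : g ∣ q := Nat.gcd_dvd_right p q
  have hgpq : g ∣ p - q := Nat.dvd_sub hgp hgq
  have hgleq : g ≤ q := Nat.le_of_dvd hq hgq
  have hglepq : g ≤ p - q := Nat.le_of_dvd (by omega) hgpq
  have ggcd : Nat.gcd (p - q) q = g := gcd_sub_left (le_of_lt hlt)
  have hper1 : ∀ i, i + (p - q) < N - q → w i = w (i + (p - q)) := by
    intro i hlt2
    have hip : i + p < N := by omega
    have h2 : i + (p - q) + q < N := by omega
    have e : i + (p - q) + q = i + p := by omega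
    have h3 := hperq (i + (p - q)) h2
    rw [e] at h3
    rw [hperp i hip, ← h3]
  have hper2 : ∀ i, i + q < N - q → w i = w (i + q) := fun i h2 => hperq i (by omega)
  have map : ∀ x, x < N → ∃ y, y < N - q ∧ y % g = x % g ∧ w x = w y := by
    intro x hx
    rcases lt_or_ge x (N - q) with hc | hc
    · exact ⟨x, hc, rfl, rfl⟩
    · have hqx : q ≤ x := by omega
      refine ⟨x - q, by omega, ?_, ?_⟩
      · obtain ⟨s, hs⟩ := hgq
        have e : x = (x - q) + q := by omega
        conv_rhs => rw [e]
        rw [hs, Nat.add_mul_mod_self_left]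
      · have h2 : (x - q) + q < N := by omega
        have h3 := hperq (x - q) h2
        rw [Nat.sub_add_cancel hqx] at h3
        exact h3.symm
  intro i j hi hj hij
  obtain ⟨yi, hyi, hyim, hwyi⟩ := map i hi
  obtain ⟨yj, hyj, hyjm, hwyj⟩ := map j hj
  have hres := ih (p - q) q (N - q) (by omega) (by omega) hq hper1 hper2
    (by rw [ggcd]; omega) yi yj hyi hyj (by rw [ggcd, hyim, hyjm]; exact hij)
  rw [hwyi, hwyj, hres]

private lemma fw {α : Type*} {w : ℕ → α} :
    ∀ (n p q N : ℕ), p + q ≤ n → 0 < p → 0 < q →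
      (∀ i, i + p < N → w i = w (i + p)) → (∀ i, i + q < N → w i = w (i + q)) →
      p + q - Nat.gcd p q ≤ N →
      ∀ i j, i < N → j < N → i % Nat.gcd p q = j % Nat.gcd p q → w i = w j := by
  intro n
  induction n with
  | zero => intro p q N hn hp hq; omega
  | succ n ih =>
    intro p q N hn hp hq hperp hperq hN i j hi hj hij
    rcases Nat.lt_trichotomy q p with hlt | heq | hlt
    · exact fw_step ih hn hq hlt hperp hperq hN i j hi hj hij
    · subst heq
      rw [Nat.gcd_self] at hij
      exact chain_mod hperp i j hi hj hij
    · have h1 := fw_step ih (by omega) hp hlt hperq hperp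
        (by rw [Nat.gcd_comm q p]; omega) i j hi hj
        (by rw [Nat.gcd_comm q p]; exact hij)
      exact h1

/-- Theorem 3.8 (periodicity lemma for double palindromic periodicities).  If
`w` is simultaneously a palindromic periodicity with (doubled) parameters
`(ra, ha)` and `(rb, hb)`, and
`|w| ≥ 2h1 + 2h2 - gcd(2(r2 - r1), 2h1, 2h2) = ha + hb - gcd(|rb - ra|, ha, hb)`,
then `w` has period `gcd(2(r2 - r1), 2h1, 2h2)`. -/
theorem stmt_19 {α : Type*} (w : ℕ → α) (N : ℕ) (ra rb : ℤ) (ha hb : ℕ)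
    (hA : IsPalPer w N ra ha) (hB : IsPalPer w N rb hb)
    (hlen : ha + hb - Nat.gcd (rb - ra).natAbs (Nat.gcd ha hb) ≤ N) :
    ∀ i, i + Nat.gcd (rb - ra).natAbs (Nat.gcd ha hb) < N →
      w i = w (i + Nat.gcd (rb - ra).natAbs (Nat.gcd ha hb)) := by
  obtain ⟨hapos, haN, hra0, hralt, hperA, hreflA⟩ := hA
  obtain ⟨hbpos, hbN, hrb0, hrblt, hperB, hreflB⟩ := hB
  set d : ℕ := Nat.gcd ha hb with hddef
  set g : ℕ := Nat.gcd (rb - ra).natAbs d with hgdef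
  have hdpos : 0 < d := Nat.gcd_pos_of_pos_left hb hapos
  have hgd : g ∣ d := Nat.gcd_dvd_right _ _
  have hgled : g ≤ d := Nat.le_of_dvd hdpos hgd
  have hdha : (d : ℤ) ∣ (ha : ℤ) := Int.natCast_dvd_natCast.mpr (Nat.gcd_dvd_left ha hb)
  have hdhb : (d : ℤ) ∣ (hb : ℤ) := Int.natCast_dvd_natCast.mpr (Nat.gcd_dvd_right ha hb)
  have Ed : ∀ i j, i < N → j < N → i % d = j % d → w i = w j :=
    fw (ha + hb) ha hb N le_rfl hapos hbpos hperA hperB (by omega)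
  have EdZ : ∀ i j : ℕ, i < N → j < N → (i : ℤ) ≡ (j : ℤ) [ZMOD (d : ℤ)] → w i = w j := by
    intro i j hi hj hij
    apply Ed i j hi hj
    have h1 : ((i % d : ℕ) : ℤ) = ((j % d : ℕ) : ℤ) := by
      rw [Int.natCast_mod, Int.natCast_mod]; exact hij
    exact_mod_cast h1
  have refl : ∀ (r : ℤ) (h : ℕ), 0 < h → h ≤ N → r < (h : ℤ) →
      (∀ (k i j : ℕ), (i : ℤ) + j = r + k * h → i < N → j < N → w i = w j) →
      ∀ i, i < N → ∃ a, a < h ∧ (a : ℤ) ≡ r - (i : ℤ) [ZMOD (h : ℤ)] ∧ w i = w a := by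
    intro r h hpos hhN hrlt hrefl i hi
    have hne : (h : ℤ) ≠ 0 := by exact_mod_cast hpos.ne'
    have h0 : (0 : ℤ) ≤ (r - (i : ℤ)) % (h : ℤ) := Int.emod_nonneg _ hne
    have hltmod : (r - (i : ℤ)) % (h : ℤ) < (h : ℤ) :=
      Int.emod_lt_of_pos _ (by exact_mod_cast hpos)
    set a : ℕ := ((r - (i : ℤ)) % (h : ℤ)).toNat with hadef
    have hacast : (a : ℤ) = (r - (i : ℤ)) % (h : ℤ) := Int.toNat_of_nonneg h0
    have halt : a < h := by omega
    have hmod : (a : ℤ) ≡ r - (i : ℤ) [ZMOD (h : ℤ)] := by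
      show (a : ℤ) % h = (r - (i : ℤ)) % h
      rw [hacast]
      exact Int.emod_emod_of_dvd _ dvd_rfl
    refine ⟨a, halt, hmod, ?_⟩
    obtain ⟨t, ht⟩ := hmod.dvd
    have ht0 : 0 ≤ -t := by
      by_contra hcon
      push_neg at hcon
      have h1t : 1 ≤ t := by omega
      have hmul : (h : ℤ) * 1 ≤ (h : ℤ) * t :=
        mul_le_mul_of_nonneg_left h1t (by positivity)
      have hia : (0 : ℤ) ≤ (i : ℤ) := Int.natCast_nonneg i
      have haa : (0 : ℤ) ≤ (a : ℤ) := Int.natCast_nonneg a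
      linarith
    refine hrefl (-t).toNat i a ?_ hi (lt_of_lt_of_le halt hhN)
    have htn : ((-t).toNat : ℤ) = -t := Int.toNat_of_nonneg ht0
    rw [htn]
    linarith [ht]
  have reflA := refl ra ha hapos haN hralt hreflA
  have reflB := refl rb hb hbpos hbN hrblt hreflB
  have shift : ∀ m : ℕ, ∀ i j, i < N → j < N →
      (j : ℤ) ≡ (i : ℤ) + (m : ℤ) * (rb - ra) [ZMOD (d : ℤ)] → w i = w j := by
    intro m
    induction m with
    | zero =>
      intro i j hi hj hm
      simp only [Nat.cast_zero, Nat.cast_ofNat, zero_mul, add_zero] at hm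
      exact EdZ i j hi hj hm.symm
    | succ m ih =>
      intro i j hi hj hm
      obtain ⟨a, halt, hamod, hwa⟩ := reflA i hi
      obtain ⟨b, hblt, hbmod, hwb⟩ := reflB a (lt_of_lt_of_le halt haN)
      have hbN' : b < N := lt_of_lt_of_le hblt hbN
      have h1 : (a : ℤ) ≡ ra - (i : ℤ) [ZMOD (d : ℤ)] := hamod.of_dvd hdha
      have h2 : (b : ℤ) ≡ rb - (a : ℤ) [ZMOD (d : ℤ)] := hbmod.of_dvd hdhb
      have hb' : (b : ℤ) ≡ (i : ℤ) + (rb - ra) [ZMOD (d : ℤ)] := by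
        have h3 : (b : ℤ) ≡ rb - (ra - (i : ℤ)) [ZMOD (d : ℤ)] :=
          h2.trans ((Int.ModEq.refl rb).sub h1)
        rwa [show rb - (ra - (i : ℤ)) = (i : ℤ) + (rb - ra) from by ring] at h3
      rw [hwa, hwb]
      apply ih b j hbN' hj
      have hm' : (j : ℤ) ≡ ((i : ℤ) + (rb - ra)) + (m : ℤ) * (rb - ra) [ZMOD (d : ℤ)] := by
        rw [show ((i : ℤ) + (rb - ra)) + (m : ℤ) * (rb - ra)
            = (i : ℤ) + ((m : ℤ) + 1) * (rb - ra) from by ring]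
        push_cast at hm
        exact hm
      exact hm'.trans (hb'.symm.add_right _)
  intro i hig
  have hi : i < N := by omega
  have hgcdeq : Int.gcd (rb - ra) (d : ℤ) = g := by
    rw [hgdef]
    simp [Int.gcd, Int.natAbs_natCast]
  have hbez : (g : ℤ) = (rb - ra) * Int.gcdA (rb - ra) (d : ℤ)
      + (d : ℤ) * Int.gcdB (rb - ra) (d : ℤ) := by
    rw [← hgcdeq]; exact Int.gcd_eq_gcd_ab _ _
  set u := Int.gcdA (rb - ra) (d : ℤ) with hudef
  set v := Int.gcdB (rb - ra) (d : ℤ) with hvdef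
  rcases le_or_gt 0 u with hu | hu
  · apply shift u.toNat i (i + g) hi (by omega)
    rw [Int.modEq_iff_dvd]
    refine ⟨-v, ?_⟩
    have htn : ((u.toNat : ℕ) : ℤ) = u := Int.toNat_of_nonneg hu
    push_cast
    rw [htn]
    linarith [hbez]
  · have htn : (((-u).toNat : ℕ) : ℤ) = -u := Int.toNat_of_nonneg (by omega)
    have hs := shift (-u).toNat (i + g) i (by omega) hi (by
      rw [Int.modEq_iff_dvd]
      refine ⟨v, ?_⟩
      push_cast
      rw [htn]
      linarith [hbez])
    exact hs.symm
end
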